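/- arXiv:2403.07858 — 2 statements merged into one kernel-verified Lean document; each statement's English description precedes it below -/
import Mathlib

section
/- Let G = (U, V, E) be a bipartite graph, p, q ≥ 1, and let L_0 ⊆ U be a nonempty partial result with |L_0| ≤ p. If |(⋂_{u∈L_0} N_2^q(u)) \ L_0| < p − |L_0|, then there exists no (p,q)-biclique (L, R) of G with L_0 ⊆ L. (Soundness of the pruning condition on the left-side candidate set: every vertex of L \ L_0 must lie in N_2^q(u) for each u ∈ L_0.) -/
/-- The 1-hop neighborhood `N(u) = {v ∈ V : (u, v) ∈ E}`. -/
def nbhd {α β : Type*} [DecidableEq α] [DecidableEq β]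
    (V : Finset β) (E : Finset (α × β)) (u : α) : Finset β :=
  V.filter fun v => (u, v) ∈ E

/-- `N_2^k(u) = {u' ∈ U : u' ≠ u ∧ |N(u) ∩ N(u')| ≥ k}`. -/
def nbhd2 {α β : Type*} [DecidableEq α] [DecidableEq β]
    (U : Finset α) (V : Finset β) (E : Finset (α × β)) (k : ℕ) (u : α) : Finset α :=
  U.filter fun w => w ≠ u ∧ k ≤ (nbhd V E u ∩ nbhd V E w).card

/-- `(L, R)` is a `(p,q)`-biclique of the bipartite graph `G = (U, V, E)`. -/
def IsBiclique {α β : Type*} [DecidableEq α] [DecidableEq β]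
    (U : Finset α) (V : Finset β) (E : Finset (α × β)) (p q : ℕ)
    (L : Finset α) (R : Finset β) : Prop :=
  L ⊆ U ∧ R ⊆ V ∧ L.card = p ∧ R.card = q ∧ ∀ u ∈ L, ∀ v ∈ R, (u, v) ∈ E

/-- Let `L_0 ⊆ U` be a nonempty partial result with `|L_0| ≤ p`.  If
`|(⋂_{u∈L_0} N_2^q(u)) \ L_0| < p − |L_0|`, then there exists no `(p,q)`-biclique
`(L, R)` of `G` with `L_0 ⊆ L`. -/
theorem pruning_left_sound {α β : Type*} [DecidableEq α] [DecidableEq β]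
    (U : Finset α) (V : Finset β) (E : Finset (α × β))
    (hE : ∀ e ∈ E, e.1 ∈ U ∧ e.2 ∈ V)
    (p q : ℕ) (hp : 1 ≤ p) (hq : 1 ≤ q)
    (L0 : Finset α) (hL0 : L0 ⊆ U) (hne : L0.Nonempty) (hcard : L0.card ≤ p)
    (hprune : ((L0.inf' hne (fun u => nbhd2 U V E q u)) \ L0).card < p - L0.card) :
    ¬ ∃ L R, IsBiclique U V E p q L R ∧ L0 ⊆ L := by
  rintro ⟨L, R, ⟨hLU, hRV, hLp, hRq, hadj⟩, hsub⟩
  have key : L \ L0 ⊆ (L0.inf' hne (fun u => nbhd2 U V E q u)) \ L0 := by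
    intro w hw
    rw [Finset.mem_sdiff] at hw ⊢
    refine ⟨(Finset.mem_inf' hne).mpr ?_, hw.2⟩
    intro u hu
    rw [nbhd2, Finset.mem_filter]
    refine ⟨hLU hw.1, fun h => hw.2 (h ▸ hu), ?_⟩
    calc q = R.card := hRq.symm
      _ ≤ (nbhd V E u ∩ nbhd V E w).card := by
        apply Finset.card_le_card
        intro v hv
        rw [Finset.mem_inter, nbhd, nbhd, Finset.mem_filter, Finset.mem_filter]
        exact ⟨⟨hRV hv, hadj u (hsub hu) v hv⟩, ⟨hRV hv, hadj w hw.1 v hv⟩⟩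
  have : p - L0.card ≤ (L \ L0).card := by
    rw [Finset.card_sdiff_of_subset hsub, hLp]
  exact absurd (le_trans this (Finset.card_le_card key)) (not_le.mpr hprune)
end

section
/- Every (p,q)-biclique (L, R) of a bipartite graph G = (U, V, E) with p ≥ 1 whose left side contains a given vertex u satisfies L ⊆ {u} ∪ N_2^q(u) and R ⊆ N(u). (Hence a partition that contains u, all vertices of N_2^q(u), and the 1-hop and 2-hop neighborhoods of these vertices is self-contained for enumerating all (p,q)-bicliques rooted at u, requiring no inter-partition communication.) -/
/-- Every `(p,q)`-biclique `(L, R)` of a bipartite graph `G = (U, V, E)` with `p ≥ 1`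
whose left side contains a given vertex `u` satisfies `L ⊆ {u} ∪ N_2^q(u)` and
`R ⊆ N(u)`. -/
theorem biclique_rooted_self_contained {α β : Type*} [DecidableEq α] [DecidableEq β]
    (U : Finset α) (V : Finset β) (E : Finset (α × β))
    (hE : ∀ e ∈ E, e.1 ∈ U ∧ e.2 ∈ V)
    (p q : ℕ) (hp : 1 ≤ p) (hq : 1 ≤ q)
    (L : Finset α) (R : Finset β) (h : IsBiclique U V E p q L R)
    (u : α) (hu : u ∈ L) :
    L ⊆ {u} ∪ nbhd2 U V E q u ∧ R ⊆ nbhd V E u := by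
  obtain ⟨hLU, hRV, hLp, hRq, hadj⟩ := h
  have hR : R ⊆ nbhd V E u := by
    intro v hv
    simp only [nbhd, Finset.mem_filter]
    exact ⟨hRV hv, hadj u hu v hv⟩
  refine ⟨?_, hR⟩
  intro w hw
  rcases eq_or_ne w u with rfl | hne
  · simp
  · refine Finset.mem_union_right _ ?_
    simp only [nbhd2, Finset.mem_filter]
    refine ⟨hLU hw, hne, ?_⟩
    calc q = R.card := hRq.symm
      _ ≤ (nbhd V E u ∩ nbhd V E w).card := by
          apply Finset.card_le_card
          intro v hv
          refine Finset.mem_inter.2 ⟨hR hv, ?_⟩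
          simp only [nbhd, Finset.mem_filter]
          exact ⟨hRV hv, hadj w hw v hv⟩
end
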